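/- Under the standing setup, let 𝓗 be a sparse ear decomposition in G and let F = v_0 v_1 ⋯ v_n v_0 be an appendage of 𝓗. Then the induced subgraph G[V(F)] contains a long hole. -/

import Mathlib

open SimpleGraph

variable {V : Type}

/-- The graph `G − S`: delete the vertices in `S` (keep the same vertex type; deleted
vertices become isolated). -/
def SimpleGraph.del (G : SimpleGraph V) (S : Set V) : SimpleGraph V where
  Adj x y := G.Adj x y ∧ x ∉ S ∧ y ∉ S
  symm := by
    constructor
    intro x y h
    exact ⟨h.1.symm, h.2.2, h.2.1⟩
  loopless := by
    constructor
    intro x h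
    exact G.loopless.irrefl x h.1

theorem SimpleGraph.del_le (G : SimpleGraph V) (S : Set V) : G.del S ≤ G := by
  intro x y h
  exact h.1

/-- The closed neighborhood `N_G[S]` of a set of vertices. -/
def closedNbhd (G : SimpleGraph V) (S : Set V) : Set V :=
  S ∪ {x | ∃ s ∈ S, G.Adj x s}

/-- A hole: an induced (chordless) cycle of length at least 4, given as a closed walk. -/
def IsHoleW (G : SimpleGraph V) {v : V} (w : G.Walk v v) : Prop :=
  w.IsCycle ∧ 4 ≤ w.length ∧
    ∀ x ∈ w.support, ∀ y ∈ w.support, G.Adj x y → w.toSubgraph.Adj x y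

/-- A long hole: an induced (chordless) cycle of length at least 6. -/
def IsLongHoleW (G : SimpleGraph V) {v : V} (w : G.Walk v v) : Prop :=
  w.IsCycle ∧ 6 ≤ w.length ∧
    ∀ x ∈ w.support, ∀ y ∈ w.support, G.Adj x y → w.toSubgraph.Adj x y

/-- A graph is `C4`-free if it has no induced cycle of length 4. -/
def C4Free (G : SimpleGraph V) : Prop :=
  ¬ ∃ (v : V) (w : G.Walk v v), w.IsCycle ∧ w.length = 4 ∧
      ∀ x ∈ w.support, ∀ y ∈ w.support, G.Adj x y → w.toSubgraph.Adj x y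

def NoLongHole (G : SimpleGraph V) : Prop :=
  ∀ (v : V) (w : G.Walk v v), ¬ IsLongHoleW G w

def NoHole (G : SimpleGraph V) : Prop :=
  ∀ (v : V) (w : G.Walk v v), ¬ IsHoleW G w

/-- `s_k = 4k(log k + log log k + 4)` for `k ≥ 2`, and `s_1 = 2`. -/
noncomputable def sK (k : ℕ) : ℝ :=
  if 2 ≤ k then 4 * k * (Real.log k + Real.log (Real.log k) + 4) else 2

/-- `μ_k = 88575 k + 24003 s_k`. -/
noncomputable def muK (k : ℕ) : ℝ := 88575 * k + 24003 * sK k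

/-- `G` contains `k` pairwise vertex-disjoint long holes. -/
def HasLongHolePacking (G : SimpleGraph V) (k : ℕ) : Prop :=
  ∃ (a : Fin k → V) (w : (i : Fin k) → G.Walk (a i) (a i)),
    (∀ i, IsLongHoleW G (w i)) ∧
    ∀ i j, i ≠ j → ∀ x ∈ (w i).support, x ∉ (w j).support

/-- `G` contains `k` pairwise vertex-disjoint holes. -/
def HasHolePacking (G : SimpleGraph V) (k : ℕ) : Prop :=
  ∃ (a : Fin k → V) (w : (i : Fin k) → G.Walk (a i) (a i)),
    (∀ i, IsHoleW G (w i)) ∧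
    ∀ i j, i ≠ j → ∀ x ∈ (w i).support, x ∉ (w j).support

/-- The distance between two vertices measured in the cycle `C` (given as a closed walk `c`). -/
noncomputable def distW (G : SimpleGraph V) {v0 : V} (c : G.Walk v0 v0) (x y : V) : ℕ :=
  c.toSubgraph.spanningCoe.dist x y

/-- A vertex `u ∉ V(C)` is almost `C`-dominating: it has at least two neighbors on `C`, and
its neighbors on `C` can be enumerated cyclically so that consecutive ones are at
`C`-distance 1 or 3. -/
def AlmostDom (G : SimpleGraph V) {v0 : V} (c : G.Walk v0 v0) (u : V) : Prop :=
  u ∉ c.support ∧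
  ∃ l : List V, l.Nodup ∧ 2 ≤ l.length ∧
    (∀ x, x ∈ l ↔ x ∈ c.support ∧ G.Adj u x) ∧
    ∀ i : Fin l.length,
      distW G c (l.get i) (l.get ⟨((i : ℕ) + 1) % l.length, Nat.mod_lt _ i.pos⟩)
        ∈ ({1, 3} : Set ℕ)

/-- Data for an ear decomposition of a subgraph of `G`: `n` ears, the `i`-th one being a
walk from `A i` to `B i`. -/
structure EarData (G : SimpleGraph V) : Type _ where
  n : ℕ
  A : Fin n → V
  B : Fin n → V
  ear : (i : Fin n) → G.Walk (A i) (B i)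

/-- The subgraph `C ∪ P_1 ∪ ⋯ ∪ P_j` (ears of index `< j`). -/
def EarData.prev {G : SimpleGraph V} (d : EarData G) {v0 : V} (c : G.Walk v0 v0) (j : ℕ) :
    G.Subgraph :=
  c.toSubgraph ⊔ ⨆ i : Fin d.n, ⨆ _ : (i : ℕ) < j, (d.ear i).toSubgraph

/-- The subgraph `C ∪ P_1 ∪ ⋯ ∪ P_ℓ`. -/
def EarData.whole {G : SimpleGraph V} (d : EarData G) {v0 : V} (c : G.Walk v0 v0) :
    G.Subgraph :=
  d.prev c d.n

/-- A subgraph has maximum degree at most 3. -/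
def MaxDeg3 {G : SimpleGraph V} (H : G.Subgraph) : Prop :=
  ∀ v : V, (H.neighborSet v).ncard ≤ 3

/-- `p` qualifies as an ear attached to the subgraph `H` (relative to the cycle `c`):
`p = p_0 ⋯ p_m` is a path of length `m ≥ 6` with `p_0 ∈ V(C)`, its other end in `H`,
all internal vertices outside `H`, `p − {p_0, p_m}` induced in `G`, and no vertex of
`{p_2, p_3, p_4}` has a neighbor in `H`. -/
def IsEarOf (G : SimpleGraph V) {v0 : V} (c : G.Walk v0 v0) (H : G.Subgraph)
    {a b : V} (p : G.Walk a b) : Prop :=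
  p.IsPath ∧ 6 ≤ p.length ∧ a ∈ c.support ∧ b ∈ H.verts ∧
  (∀ x ∈ p.support, x ≠ a → x ≠ b → x ∉ H.verts) ∧
  (∀ x ∈ p.support, x ≠ a → x ≠ b → ∀ y ∈ p.support, y ≠ a → y ≠ b →
      G.Adj x y → p.toSubgraph.Adj x y) ∧
  (∀ j ∈ ({2, 3, 4} : Set ℕ), ∀ y ∈ H.verts, ¬ G.Adj (p.getVert j) y)

/-- `d` is a sparse ear decomposition in `G` (relative to the cycle `c`). -/
def IsSED (G : SimpleGraph V) {v0 : V} (c : G.Walk v0 v0) (d : EarData G) : Prop :=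
  MaxDeg3 (d.whole c) ∧ ∀ i : Fin d.n, IsEarOf G c (d.prev c (i : ℕ)) (d.ear i)

/-- The path `p` extends the sparse ear decomposition `d`: adding `p` as a new ear again
gives a sparse ear decomposition. -/
def ExtendsSED (G : SimpleGraph V) {v0 : V} (c : G.Walk v0 v0) (d : EarData G)
    {a b : V} (p : G.Walk a b) : Prop :=
  IsEarOf G c (d.whole c) p ∧ MaxDeg3 (d.whole c ⊔ p.toSubgraph)

/-- A good sparse ear decomposition: each ear extends the previous partial decomposition,
meets `C` in as many vertices as possible, and subject to that is shortest. -/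
def GoodSED (G : SimpleGraph V) {v0 : V} (c : G.Walk v0 v0) (d : EarData G) : Prop :=
  IsSED G c d ∧ ∀ i : Fin d.n,
    (∀ (x y : V) (q : G.Walk x y),
        IsEarOf G c (d.prev c (i : ℕ)) q → MaxDeg3 (d.prev c (i : ℕ) ⊔ q.toSubgraph) →
          ({z | z ∈ q.support ∧ z ∈ c.support}).ncard ≤
            ({z | z ∈ (d.ear i).support ∧ z ∈ c.support}).ncard) ∧
    (∀ (x y : V) (q : G.Walk x y),
        IsEarOf G c (d.prev c (i : ℕ)) q → MaxDeg3 (d.prev c (i : ℕ) ⊔ q.toSubgraph) →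
          ({z | z ∈ q.support ∧ z ∈ c.support}).ncard =
            ({z | z ∈ (d.ear i).support ∧ z ∈ c.support}).ncard →
          (d.ear i).length ≤ q.length)

/-- An appendage of the sparse ear decomposition `d`: a cycle `F = v_0 v_1 ⋯ v_n v_0`
(`n ≥ 5`) whose tip `v_0 = t` is a non-branching vertex of `C`, meeting the decomposition
only in `t`, with `v_1 ⋯ v_n` induced in `G` and no vertex of `{v_2, v_3, v_4}` having a
neighbor in the decomposition. -/
def IsAppendage (G : SimpleGraph V) {v0 : V} (c : G.Walk v0 v0) (d : EarData G)
    {t : V} (F : G.Walk t t) : Prop :=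
  F.IsCycle ∧ 6 ≤ F.length ∧ t ∈ c.support ∧
  ((d.whole c).neighborSet t).ncard ≠ 3 ∧
  (∀ x ∈ F.support, x ∈ (d.whole c).verts → x = t) ∧
  (∀ x ∈ F.support, x ≠ t → ∀ y ∈ F.support, y ≠ t → G.Adj x y → F.toSubgraph.Adj x y) ∧
  (∀ j ∈ ({2, 3, 4} : Set ℕ), ∀ y ∈ (d.whole c).verts, ¬ G.Adj (F.getVert j) y)

/-- `S^r_v`: the set of vertices at distance at most `r` from `v ∈ V(C)` in the graph
`G − (D ∪ (V(C) ∖ {v}))`, where `D` is the set of almost `C`-dominating vertices. -/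
def Sball (G : SimpleGraph V) {v0 : V} (c : G.Walk v0 v0) (r : ℕ) (v : V) : Set V :=
  {x | ∃ p : (G.del ({u | AlmostDom G c u} ∪ ({y | y ∈ c.support} \ {v}))).Walk v x,
        p.length ≤ r}

/-- `S^r_X = ⋃_{v ∈ X} S^r_v`. -/
def SsetOf (G : SimpleGraph V) {v0 : V} (c : G.Walk v0 v0) (r : ℕ) (X : Set V) : Set V :=
  ⋃ v ∈ X, Sball G c r v

namespace SimpleGraph.Walk

variable {G : SimpleGraph V}

theorem exists_getVert_eq_of_mem_support_take {u v x : V} {p : G.Walk u v} {n : ℕ}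
    (hx : x ∈ (p.take n).support) : ∃ i ≤ n, i ≤ p.length ∧ p.getVert i = x := by
  obtain ⟨i, rfl, hi⟩ := mem_support_iff_exists_getVert.mp hx
  rw [take_length] at hi
  exact ⟨i, by omega, by omega, by rw [take_getVert, min_eq_right (by omega)]⟩

theorem toSubgraph_take_adj_getVert {u v : V} (p : G.Walk u v) {n i : ℕ} (hin : i < n)
    (hi : i < p.length) : (p.take n).toSubgraph.Adj (p.getVert i) (p.getVert (i + 1)) := by
  have h := (p.take n).toSubgraph_adj_getVert (i := i) (by rw [take_length]; omega)
  rwa [take_getVert, take_getVert, min_eq_right (by omega), min_eq_right (by omega)] at h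

theorem IsCycle.toSubgraph_adj_take {u x y : V} {F : G.Walk u u} (hF : F.IsCycle) {n : ℕ}
    (hx : x ∈ (F.take n).support) (hy : y ∈ (F.take n).support) (hxu : x ≠ u) (hyu : y ≠ u)
    (hxy : F.toSubgraph.Adj x y) : (F.take n).toSubgraph.Adj x y := by
  obtain ⟨a, han, hal, rfl⟩ := exists_getVert_eq_of_mem_support_take hx
  obtain ⟨b, hbn, hbl, rfl⟩ := exists_getVert_eq_of_mem_support_take hy
  have ha : a ≠ 0 := by rintro rfl; exact hxu F.getVert_zero
  have hb : b ≠ 0 := by rintro rfl; exact hyu F.getVert_zero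
  obtain ⟨i, hi, hil⟩ := F.toSubgraph_adj_iff.mp hxy
  have hi0 : i ≠ 0 := by
    rintro rfl
    rcases Sym2.eq_iff.mp hi with ⟨h, -⟩ | ⟨h, -⟩
    · exact hxu (h ▸ F.getVert_zero)
    · exact hyu (h ▸ F.getVert_zero)
  have inj {k l : ℕ} (hk : k ≠ 0) (hkl : k ≤ F.length) (hl : l ≠ 0) (hll : l ≤ F.length)
      (h : F.getVert k = F.getVert l) : k = l :=
    hF.getVert_injOn (by simp only [Set.mem_ofPred_eq]; omega)
      (by simp only [Set.mem_ofPred_eq]; omega) h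
  rcases Sym2.eq_iff.mp hi with ⟨h1, h2⟩ | ⟨h1, h2⟩
  · obtain rfl := inj hi0 (by omega) ha hal h1
    obtain rfl := inj (by omega) (by omega) hb hbl h2
    exact F.toSubgraph_take_adj_getVert (by omega) hil
  · obtain rfl := inj hi0 (by omega) hb hbl h1
    obtain rfl := inj (by omega) (by omega) ha hal h2
    exact (F.toSubgraph_take_adj_getVert (by omega) hil).symm

theorem isLongHoleW_cons {u v : V} {p : G.Walk u v} (hp : p.IsPath) (h : G.Adj v u)
    (hlen : 5 ≤ p.length)
    (hind : ∀ x ∈ p.support, x ≠ u → ∀ y ∈ p.support, y ≠ u → G.Adj x y → p.toSubgraph.Adj x y)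
    (hstart : ∀ x ∈ p.support, G.Adj u x → x = p.snd ∨ x = v) :
    IsLongHoleW G (cons h p) := by
  have hnil : ¬ p.Nil := not_nil_iff_lt_length.mpr (by omega)
  refine ⟨(cons_isCycle_iff p h).mpr ⟨hp, fun he => ?_⟩, by rw [length_cons]; omega, ?_⟩
  · have hsnd : p.getVert p.length = p.getVert 1 := by
      rw [getVert_length]; exact hp.eq_snd_of_mem_edges (Sym2.eq_swap ▸ he)
    have := hp.getVert_injOn (by simp only [Set.mem_ofPred_eq]; omega)
      (by simp only [Set.mem_ofPred_eq]; omega) hsnd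
    omega
  have hsupp : ∀ x ∈ (cons h p).support, x ∈ p.support := by
    simp only [support_cons, List.mem_cons]
    rintro x (rfl | hx)
    exacts [p.end_mem_support, hx]
  have hfromu : ∀ y ∈ p.support, G.Adj u y → (cons h p).toSubgraph.Adj u y := by
    intro y hy huy
    rcases hstart y hy huy with rfl | rfl
    · exact Subgraph.sup_adj.mpr (Or.inr (p.toSubgraph_adj_snd hnil))
    · exact Subgraph.sup_adj.mpr (Or.inl (subgraphOfAdj_adj_self h).symm)
  intro x hx y hy hxy
  replace hx := hsupp x hx
  replace hy := hsupp y hy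
  by_cases hxu : x = u
  · subst hxu; exact hfromu y hy hxy
  by_cases hyu : y = u
  · subst hyu; exact (hfromu x hx hxy.symm).symm
  exact Subgraph.sup_adj.mpr (Or.inr (hind x hx hxu y hy hyu hxy))

/-- The hole closes `F` at the first vertex `F.getVert j` with `j ≥ 2` adjacent to `t`: such a `j`
exists because the penultimate vertex of `F` is adjacent to `t`, and `j ≥ 5` because `t` misses
positions 2, 3 and 4. -/
theorem IsCycle.exists_isLongHoleW {t : V} {F : G.Walk t t} (hF : F.IsCycle)
    (hind : ∀ x ∈ F.support, x ≠ t → ∀ y ∈ F.support, y ≠ t → G.Adj x y → F.toSubgraph.Adj x y)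
    (hfar : ∀ i ∈ ({2, 3, 4} : Set ℕ), ¬ G.Adj t (F.getVert i)) :
    ∃ (u : V) (w : G.Walk u u), IsLongHoleW G w ∧ ∀ x ∈ w.support, x ∈ F.support := by
  classical
  have h3 := hF.three_le_length
  have hlast : G.Adj t (F.getVert (F.length - 1)) := by
    have h := F.adj_getVert_succ (i := F.length - 1) (by omega)
    rw [Nat.sub_add_cancel (by omega), getVert_length] at h
    exact h.symm
  have hex : ∃ j, 2 ≤ j ∧ G.Adj t (F.getVert j) := ⟨F.length - 1, by omega, hlast⟩
  obtain ⟨hj2, hjadj⟩ := Nat.find_spec hex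
  set j := Nat.find hex
  have hjmin : ∀ i, 2 ≤ i → G.Adj t (F.getVert i) → j ≤ i :=
    fun i h2 hadj => Nat.find_min' hex ⟨h2, hadj⟩
  have hj5 : 5 ≤ j := by
    by_contra hlt
    exact hfar j (by simp only [Set.mem_insert_iff, Set.mem_singleton_iff]; omega) hjadj
  have hjlt : j < F.length := by
    have := hjmin _ (by omega) hlast
    omega
  have hp : (F.take j).IsPath := hF.isPath_take hjlt
  have hsub : (F.take j).support ⊆ F.support := (F.isSubwalk_take j).support_subset
  refine ⟨_, cons hjadj.symm (F.take j), isLongHoleW_cons hp hjadj.symm ?_ ?_ ?_, ?_⟩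
  · rw [take_length]; omega
  · intro x hx hxt y hy hyt hxy
    exact hF.toSubgraph_adj_take hx hy hxt hyt
      (hind x (hsub hx) hxt y (hsub hy) hyt hxy)
  · intro x hx htx
    obtain ⟨a, haj, -, rfl⟩ := exists_getVert_eq_of_mem_support_take hx
    rcases Nat.lt_or_ge a 2 with ha | ha
    · obtain rfl | rfl : a = 0 ∨ a = 1 := by omega
      · rw [getVert_zero] at htx
        exact absurd htx (G.loopless.irrefl t)
      · left; rw [snd, take_getVert, min_eq_right (by omega)]
    · right; rw [le_antisymm haj (hjmin a ha htx)]
  · simp only [support_cons, List.mem_cons]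
    rintro x (rfl | hx)
    exacts [F.getVert_mem_support j, hsub hx]

end SimpleGraph.Walk

theorem statement_15_general
    (G : SimpleGraph V) (v0 : V) (c : G.Walk v0 v0) (d : EarData G)
    (t : V) (F : G.Walk t t) (hF : IsAppendage G c d F) :
    ∃ (u : V) (w : G.Walk u u), IsLongHoleW G w ∧ ∀ x ∈ w.support, x ∈ F.support := by
  obtain ⟨hcyc, -, htc, -, -, hind, hfar⟩ := hF
  have ht : t ∈ (d.whole c).verts := Or.inl ((Walk.mem_verts_toSubgraph c).mpr htc)
  exact hcyc.exists_isLongHoleW hind fun i hi hadj => hfar i hi t ht hadj.symm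

theorem statement_15
    [Fintype V] (G : SimpleGraph V) (k : ℕ) (hk : 1 ≤ k) (h4 : C4Free G)
    (v0 : V) (c : G.Walk v0 v0) (hc : IsLongHoleW G c)
    (hshort : ∀ (u : V) (w : G.Walk u u), IsLongHoleW G w → c.length ≤ w.length)
    (hbig : muK k < (c.length : ℝ))
    (hnone : NoLongHole (G.del {x | x ∈ c.support}))
    (d : EarData G) (hd : IsSED G c d)
    (t : V) (F : G.Walk t t) (hF : IsAppendage G c d F) :
    ∃ (u : V) (w : G.Walk u u), IsLongHoleW G w ∧ ∀ x ∈ w.support, x ∈ F.support :=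
  statement_15_general G v0 c d t F hF
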